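/- arXiv:1008.4745 — 3 statements merged into one kernel-verified Lean document; each statement's English description precedes it below -/
import Mathlib

section
/- Let X be a CAT(-1) space, r > 0, and let {C_i} be a family of convex subsets of X that is r-separated (the distance between any two distinct members is at least r). Then the family has bounded penetration: there is a function D(ρ) such that for any two distinct members C_i, C_j, the intersection of their closed ρ-neighborhoods has diameter at most D(ρ). -/
/-!
Let `x, y` lie in the `ε`-neighbourhoods of two convex sets `A` and `B`; pick `a ∈ A`, `b ∈ B`
within `ε` of `x` and `a' ∈ A`, `b' ∈ B` within `ε` of `y`. Comparing with a triangle in the upper half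
plane, in a CAT(-1) space two geodesics issuing from `p` towards `q` and `r` stay within
`exp (s - (q | r)_p)` of each other at time `s`, where `(q | r)_p` is the Gromov product. Applied
to the triangles `a a' b'` and `b' b a`, this puts the midpoint of `[a, b']` within
`exp ((4ε - d(x, y)) / 2)` of both `[a, a'] ⊆ A` and `[b', b] ⊆ B`. As `A` and `B` are
`r`-separated, `d(x, y) ≤ 4ε - 2 log (r / 2)` unless `d(x, y) < 6ε`.
-/

noncomputable section
open Metric Set

/-- `γ` restricted to `[a,b]` is a unit-speed (minimizing) geodesic segment. -/
def IsGeodesicOn {X : Type*} [MetricSpace X] (γ : ℝ → X) (a b : ℝ) : Prop :=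
  a ≤ b ∧ ∀ s ∈ Set.Icc a b, ∀ t ∈ Set.Icc a b, dist (γ s) (γ t) = |s - t|

/-- Every pair of points is joined by a geodesic segment. -/
def IsGeodesicSpace (X : Type*) [MetricSpace X] : Prop :=
  ∀ x y : X, ∃ γ : ℝ → X, IsGeodesicOn γ 0 (dist x y) ∧ γ 0 = x ∧ γ (dist x y) = y

/-- Comparison condition defining CAT spaces with model space `M`:
for any geodesic triangle and a comparison triangle in `M`, distances between
points on two sides issuing from a common vertex are bounded by the
corresponding distances in the comparison triangle. -/
def CATWith (M : Type*) [MetricSpace M] (X : Type*) [MetricSpace X] : Prop :=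
  IsGeodesicSpace X ∧
  ∀ (p q r : X) (γ δ : ℝ → X),
    IsGeodesicOn γ 0 (dist p q) → γ 0 = p → γ (dist p q) = q →
    IsGeodesicOn δ 0 (dist p r) → δ 0 = p → δ (dist p r) = r →
    ∀ (p' q' r' : M) (γ' δ' : ℝ → M),
      dist p' q' = dist p q → dist p' r' = dist p r → dist q' r' = dist q r →
      IsGeodesicOn γ' 0 (dist p q) → γ' 0 = p' → γ' (dist p q) = q' →
      IsGeodesicOn δ' 0 (dist p r) → δ' 0 = p' → δ' (dist p r) = r' →
      ∀ s ∈ Set.Icc (0:ℝ) (dist p q), ∀ t ∈ Set.Icc (0:ℝ) (dist p r),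
        dist (γ s) (δ t) ≤ dist (γ' s) (δ' t)

/-- A CAT(-1) space: comparison with the hyperbolic plane of curvature `-1`. -/
def CATMinusOne (X : Type*) [MetricSpace X] : Prop := CATWith UpperHalfPlane X

/-- A CAT(0) space: comparison with the Euclidean plane. -/
def CATZero (X : Type*) [MetricSpace X] : Prop := CATWith (EuclideanSpace ℝ (Fin 2)) X

/-- A subset is (geodesically) convex if it contains every geodesic segment
between any two of its points. -/
def GConvex {X : Type*} [MetricSpace X] (A : Set X) : Prop :=
  ∀ (γ : ℝ → X) (a b : ℝ), IsGeodesicOn γ a b → γ a ∈ A → γ b ∈ A →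
    ∀ t ∈ Set.Icc a b, γ t ∈ A

/-- Distance between two subsets: the infimum of distances between their points. -/
def setDist {X : Type*} [MetricSpace X] (A B : Set X) : ℝ :=
  sInf ((fun p : X × X => dist p.1 p.2) '' A ×ˢ B)

end

open Real UpperHalfPlane
open scoped MatrixGroups

namespace UpperHalfPlane

theorem cosh_dist_smul (g : SL(2, ℝ)) (z w : ℍ) :
    cosh (dist z (g • w)) = 1 +
      Complex.normSq (z * (g 1 0 * w + g 1 1) - (g 0 0 * w + g 0 1)) / (2 * z.im * w.im) := by
  have hd := denom_ne_zero g w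
  have hsmul : g • w = Matrix.SpecialLinearGroup.toGL g • w := rfl
  rw [cosh_dist, Complex.dist_eq, hsmul, im_smul_eq_div_normSq, coe_smul_of_det_pos (by simp),
    ← Complex.normSq_eq_norm_sq, sub_div' hd, Complex.normSq_div]
  have := w.im_pos
  have := z.im_pos
  have := Complex.normSq_pos.2 hd
  field_simp
  simp only [num, denom, Matrix.SpecialLinearGroup.coeToGL_det,
    Matrix.SpecialLinearGroup.coe_GL_coe_matrix, Units.val_one, abs_one]
  ring_nf

noncomputable def imagAxis (t : ℝ) : ℍ := mk ⟨0, exp t⟩ (exp_pos t)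

noncomputable def rotationSL (θ : ℝ) : SL(2, ℝ) :=
  ⟨!![cos θ, sin θ; -sin θ, cos θ], by simp [Matrix.det_fin_two_of, ← sq]⟩

theorem dist_imagAxis (s t : ℝ) : dist (imagAxis s) (imagAxis t) = |s - t| :=
  (isometry_vertical_line 0).dist_eq s t

/-- The hyperbolic law of cosines, for the angle `2θ` at `I` between `imagAxis` and its image
under `rotationSL θ`. -/
theorem cosh_dist_imagAxis_rotationSL_smul (θ s t : ℝ) :
    cosh (dist (imagAxis s) (rotationSL θ • imagAxis t)) =
      sin θ ^ 2 * cosh (s + t) + cos θ ^ 2 * cosh (s - t) := by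
  rw [cosh_dist_smul]
  simp only [imagAxis, rotationSL, Fin.isValue, Matrix.of_apply, Matrix.cons_val',
    Matrix.cons_val_zero, Matrix.cons_val_fin_one, Matrix.cons_val_one, Complex.ofReal_neg,
    Complex.ofReal_sin, neg_mul, Complex.ofReal_cos, Complex.normSq_apply, Complex.sub_re,
    Complex.mul_re, Complex.add_re, Complex.neg_re, Complex.sin_ofReal_re, mul_zero,
    Complex.sin_ofReal_im, zero_mul, sub_self, neg_zero, Complex.cos_ofReal_re, zero_add,
    Complex.add_im, Complex.neg_im, Complex.mul_im, add_zero, Complex.cos_ofReal_im, mul_neg,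
    sub_neg_eq_add, Complex.sub_im, mk_im, cosh_eq, exp_add, neg_add_rev, exp_neg, exp_sub,
    neg_sub]
  field_simp
  linear_combination (-2 * exp s * exp t) * sin_sq_add_cos_sq θ

theorem rotationSL_smul_imagAxis_zero (θ : ℝ) : rotationSL θ • imagAxis 0 = imagAxis 0 := by
  have h : cosh (dist (imagAxis 0) (rotationSL θ • imagAxis 0)) = cosh 0 := by
    rw [cosh_dist_imagAxis_rotationSL_smul, add_zero, sub_zero, cosh_zero, mul_one, mul_one,
      sin_sq_add_cos_sq]
  exact (dist_eq_zero.1 (cosh_injOn dist_nonneg Set.self_mem_Ici h)).symm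

theorem isGeodesicOn_imagAxis {a b : ℝ} (h : a ≤ b) : IsGeodesicOn imagAxis a b :=
  ⟨h, fun s _ t _ => dist_imagAxis s t⟩

theorem isGeodesicOn_rotationSL_smul_imagAxis (θ : ℝ) {a b : ℝ} (h : a ≤ b) :
    IsGeodesicOn (fun t => rotationSL θ • imagAxis t) a b :=
  ⟨h, fun s _ t _ => by rw [dist_smul, dist_imagAxis]⟩

end UpperHalfPlane

namespace Real

theorem exists_cosh_eq_sin_sq_mul_add_cos_sq_mul {a b c : ℝ} (h₁ : |a - b| ≤ c)
    (h₂ : c ≤ a + b) : ∃ θ, cosh c = sin θ ^ 2 * cosh (a + b) + cos θ ^ 2 * cosh (a - b) := by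
  have hc : 0 ≤ c := (abs_nonneg _).trans h₁
  have hlow : cosh (a - b) ≤ cosh c := cosh_le_cosh.2 (by rwa [abs_of_nonneg hc])
  have hhigh : cosh c ≤ cosh (a + b) :=
    cosh_le_cosh.2 (by rw [abs_of_nonneg hc]; exact h₂.trans (le_abs_self _))
  obtain ⟨θ, -, hθ⟩ := intermediate_value_Icc pi_div_two_pos.le
    (f := fun θ => sin θ ^ 2 * cosh (a + b) + cos θ ^ 2 * cosh (a - b))
    (by fun_prop) ⟨by simpa [-cosh_le_cosh] using hlow, by simpa [-cosh_le_cosh] using hhigh⟩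
  exact ⟨θ, hθ.symm⟩

theorem sinh_le_exp_sub_mul_sinh {s d : ℝ} (h : s ≤ d) : sinh s ≤ exp (s - d) * sinh d := by
  have hexp : exp (s - d) * exp (-d) ≤ exp (-s) := by
    rw [← exp_add]; exact exp_le_exp.2 (by linarith)
  rw [sinh_eq, sinh_eq, mul_div_assoc', mul_sub, ← exp_add, sub_add_cancel]
  gcongr

theorem sq_le_two_mul_cosh_sub_one (x : ℝ) : x ^ 2 ≤ 2 * (cosh x - 1) := by
  have hsinh : |x| / 2 ≤ sinh (|x| / 2) := self_le_sinh_iff.2 (by positivity)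
  have hcosh := cosh_two_mul (|x| / 2)
  rw [show 2 * (|x| / 2) = |x| by ring, cosh_sq] at hcosh
  rw [← cosh_abs, hcosh, ← sq_abs]
  nlinarith [abs_nonneg x]

end Real

theorem IsGeodesicOn.comp_sub {X : Type*} [MetricSpace X] {γ : ℝ → X} {d : ℝ}
    (h : IsGeodesicOn γ 0 d) : IsGeodesicOn (fun t => γ (d - t)) 0 d := by
  refine ⟨h.1, fun s hs t ht => ?_⟩
  rw [h.2 _ ⟨by linarith [hs.2], by linarith [hs.1]⟩ _ ⟨by linarith [ht.2], by linarith [ht.1]⟩,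
    abs_sub_comm]
  ring_nf

theorem setDist_le_dist {X : Type*} [MetricSpace X] {A B : Set X} {a b : X}
    (ha : a ∈ A) (hb : b ∈ B) : setDist A B ≤ dist a b :=
  csInf_le ⟨0, by rintro _ ⟨_, _, rfl⟩; exact dist_nonneg⟩ ⟨(a, b), Set.mk_mem_prod ha hb, rfl⟩

namespace CATMinusOne

variable {X : Type*} [MetricSpace X]

theorem sinh_mul_sinh_mul_cosh_dist_sub_one_le (hX : CATMinusOne X) {p q r : X} {γ δ : ℝ → X}
    (hγ : IsGeodesicOn γ 0 (dist p q)) (hγ0 : γ 0 = p) (hγ1 : γ (dist p q) = q)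
    (hδ : IsGeodesicOn δ 0 (dist p r)) (hδ0 : δ 0 = p) (hδ1 : δ (dist p r) = r)
    {s : ℝ} (hs0 : 0 ≤ s) (hsq : s ≤ dist p q) (hsr : s ≤ dist p r) :
    sinh (dist p q) * sinh (dist p r) * (cosh (dist (γ s) (δ s)) - 1) ≤
      sinh s ^ 2 * (cosh (dist q r) - 1) := by
  set a := dist p q
  set b := dist p r
  set c := dist q r
  obtain ⟨θ, hθ⟩ := exists_cosh_eq_sin_sq_mul_add_cos_sq_mul (a := a) (b := b) (c := c)
    (by simpa only [Real.dist_eq] using dist_dist_dist_le_right p q r) (dist_triangle_left q r p)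
  have hq' : dist (imagAxis 0) (imagAxis a) = a := by
    rw [dist_imagAxis, zero_sub, abs_neg, abs_of_nonneg dist_nonneg]
  have hr' : dist (imagAxis 0) (rotationSL θ • imagAxis b) = b := by
    rw [← rotationSL_smul_imagAxis_zero θ, dist_smul, dist_imagAxis, zero_sub, abs_neg,
      abs_of_nonneg dist_nonneg]
  have hqr' : dist (imagAxis a) (rotationSL θ • imagAxis b) = c :=
    cosh_injOn dist_nonneg dist_nonneg (by rw [cosh_dist_imagAxis_rotationSL_smul, hθ])
  have hcomp : dist (γ s) (δ s) ≤ dist (imagAxis s) (rotationSL θ • imagAxis s) :=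
    hX.2 p q r γ δ hγ hγ0 hγ1 hδ hδ0 hδ1 _ _ _ imagAxis (fun t => rotationSL θ • imagAxis t)
      hq' hr' hqr' (isGeodesicOn_imagAxis dist_nonneg) rfl rfl
      (isGeodesicOn_rotationSL_smul_imagAxis θ dist_nonneg) (rotationSL_smul_imagAxis_zero θ) rfl
      s ⟨hs0, hsq⟩ s ⟨hs0, hsr⟩
  have hmid : cosh (dist (γ s) (δ s)) - 1 ≤ 2 * sin θ ^ 2 * sinh s ^ 2 := by
    have : cosh (dist (γ s) (δ s)) ≤ cosh (dist (imagAxis s) (rotationSL θ • imagAxis s)) :=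
      cosh_le_cosh.2 (by rwa [abs_of_nonneg dist_nonneg, abs_of_nonneg dist_nonneg])
    rw [cosh_dist_imagAxis_rotationSL_smul, sub_self, cosh_zero, ← two_mul, cosh_two_mul,
      cosh_sq] at this
    linear_combination this + cos_sq_add_sin_sq θ
  have hside : 2 * sin θ ^ 2 * (sinh a * sinh b) ≤ cosh c - 1 := by
    rw [hθ, cosh_add, cosh_sub]
    nlinarith [one_le_cosh (a - b), cosh_sub a b, sin_sq_add_cos_sq θ]
  have hab : 0 ≤ sinh a * sinh b :=
    mul_nonneg (sinh_nonneg_iff.2 dist_nonneg) (sinh_nonneg_iff.2 dist_nonneg)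
  calc sinh a * sinh b * (cosh (dist (γ s) (δ s)) - 1)
      ≤ sinh a * sinh b * (2 * sin θ ^ 2 * sinh s ^ 2) := by gcongr
    _ = sinh s ^ 2 * (2 * sin θ ^ 2 * (sinh a * sinh b)) := by ring
    _ ≤ sinh s ^ 2 * (cosh c - 1) := by gcongr

theorem dist_le_exp (hX : CATMinusOne X) {p q r : X} {γ δ : ℝ → X}
    (hγ : IsGeodesicOn γ 0 (dist p q)) (hγ0 : γ 0 = p) (hγ1 : γ (dist p q) = q)
    (hδ : IsGeodesicOn δ 0 (dist p r)) (hδ0 : δ 0 = p) (hδ1 : δ (dist p r) = r)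
    {s : ℝ} (hs0 : 0 ≤ s) (hsq : s ≤ dist p q) (hsr : s ≤ dist p r) :
    dist (γ s) (δ s) ≤ exp (s - (dist p q + dist p r - dist q r) / 2) := by
  rcases hs0.eq_or_lt with rfl | hs
  · rw [hγ0, hδ0, dist_self]; positivity
  have hkey := sinh_mul_sinh_mul_cosh_dist_sub_one_le hX hγ hγ0 hγ1 hδ hδ0 hδ1 hs0 hsq hsr
  set a := dist p q
  set b := dist p r
  set c := dist q r
  have hsinh : 0 < sinh a * sinh b :=
    mul_pos (sinh_pos_iff.2 (hs.trans_le hsq)) (sinh_pos_iff.2 (hs.trans_le hsr))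
  have hsinh_sq : sinh s ^ 2 ≤ exp (2 * s - a - b) * (sinh a * sinh b) :=
    calc sinh s ^ 2 = sinh s * sinh s := sq _
      _ ≤ (exp (s - a) * sinh a) * (exp (s - b) * sinh b) := by
          gcongr <;> exact sinh_le_exp_sub_mul_sinh ‹_›
      _ = _ := by rw [show 2 * s - a - b = (s - a) + (s - b) by ring, exp_add]; ring
  have hcosh : cosh c - 1 ≤ exp c / 2 := by
    have := exp_le_one_iff.2 (neg_nonpos.2 (dist_nonneg (x := q) (y := r)))
    rw [cosh_eq]; linarith
  have hcosh_mid : cosh (dist (γ s) (δ s)) - 1 ≤ exp (2 * s - a - b) * (exp c / 2) := by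
    refine le_of_mul_le_mul_left (hkey.trans ?_) hsinh
    calc sinh s ^ 2 * (cosh c - 1)
        ≤ exp (2 * s - a - b) * (sinh a * sinh b) * (exp c / 2) := by
          gcongr
          linarith [one_le_cosh c]
      _ = _ := by ring
  refine (pow_le_pow_iff_left₀ dist_nonneg (exp_pos _).le two_ne_zero).1 ?_
  calc dist (γ s) (δ s) ^ 2 ≤ 2 * (cosh (dist (γ s) (δ s)) - 1) := sq_le_two_mul_cosh_sub_one _
    _ ≤ exp (2 * s - a - b) * exp c := by linarith
    _ = _ := by rw [← exp_add, ← exp_nat_mul]; ring_nf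

theorem exists_dist_le_of_gConvex (hX : CATMinusOne X) {A B : Set X} (hA : GConvex A)
    (hB : GConvex B) {a a' b b' : X} (ha : a ∈ A) (ha' : a' ∈ A) (hb : b ∈ B) (hb' : b' ∈ B)
    (haa' : dist a b' ≤ 2 * dist a a') (hbb' : dist a b' ≤ 2 * dist b' b) :
    ∃ u ∈ A, ∃ v ∈ B,
      dist u v ≤ exp ((dist a' b' - dist a a') / 2) + exp ((dist a b - dist b' b) / 2) := by
  obtain ⟨γ, hγ, hγ0, hγ1⟩ := hX.1 a a'
  obtain ⟨δ, hδ, hδ0, hδ1⟩ := hX.1 a b'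
  obtain ⟨β, hβ, hβ0, hβ1⟩ := hX.1 b' b
  set s := dist a b' / 2 with hs
  have hs0 : 0 ≤ s := by positivity
  have hsb' : s ≤ dist a b' := by linarith [dist_nonneg (x := a) (y := b')]
  have hγs : γ s ∈ A := hA γ 0 _ hγ (by rwa [hγ0]) (by rwa [hγ1]) s ⟨hs0, by linarith⟩
  have hβs : β s ∈ B := hB β 0 _ hβ (by rwa [hβ0]) (by rwa [hβ1]) s ⟨hs0, by linarith⟩
  have hδ' : IsGeodesicOn (fun t => δ (dist a b' - t)) 0 (dist b' a) := by
    rw [dist_comm b' a]; exact hδ.comp_sub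
  have h₁ := dist_le_exp hX hγ hγ0 hγ1 hδ hδ0 hδ1 hs0 (by linarith) hsb'
  have h₂ := dist_le_exp hX hβ hβ0 hβ1 hδ' (by simpa using hδ1) (by simp [dist_comm, hδ0])
    hs0 (by linarith) (by rwa [dist_comm])
  rw [show dist a b' - s = s by linarith, dist_comm b' a, dist_comm b a] at h₂
  refine ⟨γ s, hγs, β s, hβs, ?_⟩
  calc dist (γ s) (β s) ≤ dist (γ s) (δ s) + dist (β s) (δ s) := dist_triangle_right _ _ _
    _ ≤ _ := add_le_add (h₁.trans_eq (by congr 1; ring)) (h₂.trans_eq (by congr 1; ring))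

theorem exists_dist_le_of_mem_thickening (hX : CATMinusOne X) {A B : Set X} (hA : GConvex A)
    (hB : GConvex B) {ε : ℝ} {x y : X} (hx : x ∈ Metric.thickening ε A ∩ Metric.thickening ε B)
    (hy : y ∈ Metric.thickening ε A ∩ Metric.thickening ε B) (hxy : 6 * ε ≤ dist x y) :
    ∃ u ∈ A, ∃ v ∈ B, dist u v ≤ 2 * exp ((4 * ε - dist x y) / 2) := by
  obtain ⟨a, ha, hxa⟩ := Metric.mem_thickening_iff.1 hx.1
  obtain ⟨b, hb, hxb⟩ := Metric.mem_thickening_iff.1 hx.2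
  obtain ⟨a', ha', hya'⟩ := Metric.mem_thickening_iff.1 hy.1
  obtain ⟨b', hb', hyb'⟩ := Metric.mem_thickening_iff.1 hy.2
  have hab' : dist a b' ≤ dist x y + 2 * ε := by
    linarith [dist_triangle4 a x y b', dist_comm a x]
  have haa' : dist x y - 2 * ε ≤ dist a a' := by
    linarith [dist_triangle4 x a a' y, dist_comm a' y]
  have hbb' : dist x y - 2 * ε ≤ dist b' b := by
    linarith [dist_triangle4 y b' b x, dist_comm b x, dist_comm y x]
  have ha'b' : dist a' b' ≤ 2 * ε := by linarith [dist_triangle a' y b', dist_comm a' y]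
  have hab : dist a b ≤ 2 * ε := by linarith [dist_triangle a x b, dist_comm a x]
  obtain ⟨u, hu, v, hv, huv⟩ :=
    exists_dist_le_of_gConvex hX hA hB ha ha' hb hb' (by linarith) (by linarith)
  refine ⟨u, hu, v, hv, huv.trans ?_⟩
  rw [two_mul]
  exact add_le_add (exp_le_exp.2 (by linarith)) (exp_le_exp.2 (by linarith))

end CATMinusOne

/-- An `r`-separated family of convex subsets of a CAT(-1)
space has bounded penetration: the intersection of the `ρ`-neighborhoods of two
distinct members has diameter bounded by a function of `ρ` alone. -/
theorem statement1 {X : Type*} [MetricSpace X] (hX : CATMinusOne X)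
    {ι : Type*} (C : ι → Set X) (r : ℝ) (hr : 0 < r)
    (hconv : ∀ i, GConvex (C i))
    (hsep : ∀ i j, i ≠ j → r ≤ setDist (C i) (C j)) :
    ∃ D : ℝ → ℝ, ∀ (ρ : ℝ) (i j : ι), i ≠ j →
      EMetric.diam (Metric.cthickening ρ (C i) ∩ Metric.cthickening ρ (C j)) ≤
        ENNReal.ofReal (D ρ) := by
  refine ⟨fun ρ => max (6 * (max ρ 0 + 1)) (4 * (max ρ 0 + 1) - 2 * log (r / 2)),
    fun ρ i j hij => Metric.ediam_le fun x hx y hy => ?_⟩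
  set ε := max ρ 0 + 1
  have hthick : ∀ k, Metric.cthickening ρ (C k) ⊆ Metric.thickening ε (C k) := fun k =>
    Metric.cthickening_subset_thickening' (by positivity) (by linarith [le_max_left ρ 0]) _
  rw [edist_dist]
  refine ENNReal.ofReal_le_ofReal ?_
  rcases le_or_gt (dist x y) (6 * ε) with hxy | hxy
  · exact le_max_of_le_left hxy
  obtain ⟨u, hu, v, hv, huv⟩ := CATMinusOne.exists_dist_le_of_mem_thickening hX
    (hconv i) (hconv j) ⟨hthick i hx.1, hthick j hx.2⟩ ⟨hthick i hy.1, hthick j hy.2⟩ hxy.le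
  have hr' : r / 2 ≤ exp ((4 * ε - dist x y) / 2) := by
    linarith [hsep i j hij, setDist_le_dist hu hv]
  exact le_max_of_le_right (by linarith [(log_le_iff_le_exp (by positivity)).2 hr'])
end

section
/- For every angle θ₁ > 0 there exist constants r₁, λ₁, ε₁ such that in any CAT(-1) space, every piecewise geodesic path whose geodesic pieces each have length at least r₁ and whose successive pieces meet at Alexandrov angle at least θ₁ is a (λ₁, ε₁)-quasi-geodesic. -/
/-- The comparison angle (hyperbolic law of cosines): the angle at the vertex of
a hyperbolic triangle with adjacent sides `s, t` and opposite side `d`. -/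
noncomputable def compAngle (s t d : ℝ) : ℝ :=
  Real.arccos ((Real.cosh s * Real.cosh t - Real.cosh d) / (Real.sinh s * Real.sinh t))

/-- `c` is a (λ,ε)-quasi-geodesic on `[a,b]` (parametrized by arclength). -/
def IsQuasiGeodesicOn {X : Type*} [MetricSpace X] (lam eps : ℝ) (c : ℝ → X)
    (a b : ℝ) : Prop :=
  ∀ s ∈ Set.Icc a b, ∀ t ∈ Set.Icc a b, |s - t| ≤ lam * dist (c s) (c t) + eps

/-- `c` is a piecewise geodesic with break points `T 0 < T 1 < ... < T n`, each
piece of length at least `r`, and with (Alexandrov) angle at least `θ` between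
successive pieces; in a CAT(-1) space the Alexandrov angle is at least `θ` iff
every comparison angle is at least `θ`. -/
def PiecewiseGeodesicWith {X : Type*} [MetricSpace X] (c : ℝ → X) (T : ℕ → ℝ)
    (n : ℕ) (r θ : ℝ) : Prop :=
  0 < n ∧
  (∀ i < n, T i < T (i + 1) ∧ r ≤ T (i + 1) - T i ∧ IsGeodesicOn c (T i) (T (i + 1))) ∧
  ∀ i, 0 < i → i < n →
    ∀ s, 0 < s → s ≤ T i - T (i - 1) → ∀ t, 0 < t → t ≤ T (i + 1) - T i →
      θ ≤ compAngle s t (dist (c (T i - s)) (c (T i + t)))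


/-!
CAT(-1) spaces are Gromov hyperbolic with `δ = 1`: comparing with a triangle in `ℍ`, the points at
distance `t ≤ (x|y)_w` from `w` on geodesics to `x` and to `y` are within distance `1` of each
other. An angle of at least `θ` at a break point bounds the Gromov product of its two neighbours by
a constant `K` depending only on `θ` (hyperbolic law of cosines). Along a chain of points whose
interior edges are longer than `2 (K + δ)`, the four-point condition then propagates this bound
with a loss of `δ`, so the endpoints are at distance at least the total length minus `2 (K + δ)`
per interior vertex. When the pieces have length at least `4 (K + δ)` this is half the length up
to an additive constant. Arbitrary parameters `s < t` are handled by applying this to the part of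
the path between them, whose first and last pieces may be short.
-/

open Real UpperHalfPlane

theorem IsGeodesicOn.mono {X : Type*} [MetricSpace X] {γ : ℝ → X} {a b a' b' : ℝ}
    (hγ : IsGeodesicOn γ a b) (ha : a ≤ a') (hab : a' ≤ b') (hb : b' ≤ b) :
    IsGeodesicOn γ a' b' :=
  ⟨hab, fun s hs t ht => hγ.2 s ⟨ha.trans hs.1, hs.2.trans hb⟩ t ⟨ha.trans ht.1, ht.2.trans hb⟩⟩

theorem IsGeodesicOn.dist_eq_sub {X : Type*} [MetricSpace X] {γ : ℝ → X} {a b s t : ℝ}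
    (hγ : IsGeodesicOn γ a b) (hs : a ≤ s) (hst : s ≤ t) (ht : t ≤ b) :
    dist (γ s) (γ t) = t - s := by
  rw [hγ.2 s ⟨hs, hst.trans ht⟩ t ⟨hs.trans hst, ht⟩, abs_sub_comm, abs_of_nonneg (by linarith)]

theorem Nat.exists_lt_not_and_succ {p : ℕ → Prop} {n : ℕ} (h₀ : ¬p 0) (hn : p n) :
    ∃ j < n, ¬p j ∧ p (j + 1) := by
  induction n with
  | zero => exact absurd hn h₀
  | succ n ih =>
    by_cases h : p n
    · obtain ⟨j, hj, hj'⟩ := ih h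
      exact ⟨j, by omega, hj'⟩
    · exact ⟨n, by omega, h, hn⟩

theorem isQuasiGeodesicOn_of_forall_lt {X : Type*} [MetricSpace X] {lam eps : ℝ} {c : ℝ → X}
    {a b : ℝ} (heps : 0 ≤ eps)
    (h : ∀ s t, a ≤ s → s < t → t ≤ b → t - s ≤ lam * dist (c s) (c t) + eps) :
    IsQuasiGeodesicOn lam eps c a b := by
  intro s hs t ht
  rcases lt_trichotomy s t with hst | rfl | hts
  · rw [abs_sub_comm, abs_of_pos (sub_pos.mpr hst)]
    exact h s t hs.1 hst ht.2
  · simpa using heps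
  · rw [abs_of_pos (sub_pos.mpr hts), dist_comm]
    exact h t s ht.1 hts hs.2

theorem sinh_le_sinh_mul_exp_sub {t a : ℝ} (h : t ≤ a) : sinh t ≤ sinh a * exp (t - a) := by
  have : exp (t - 2 * a) ≤ exp (-t) := exp_le_exp.mpr (by linarith)
  rw [sinh_eq, sinh_eq, div_mul_eq_mul_div, sub_mul, ← exp_add, ← exp_add]
  ring_nf at this ⊢
  linarith

theorem exp_neg_mul_cosh_sub_one_le {c : ℝ} (hc : 0 ≤ c) : exp (-c) * (cosh c - 1) ≤ 1 / 2 := by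
  have h1 : exp (-c) ≤ 1 := exp_le_one_iff.mpr (by linarith)
  have h2 : exp (-c) * exp c = 1 := by rw [← exp_add]; simp
  rw [cosh_eq]
  nlinarith [exp_pos (-c)]

theorem three_halves_le_cosh_one : (3 : ℝ) / 2 ≤ cosh 1 := by
  rw [cosh_eq, exp_neg]
  nlinarith [exp_one_gt_d9, mul_inv_cancel₀ (exp_pos 1).ne', inv_pos.mpr (exp_pos 1)]

/-- In a hyperbolic triangle with sides `a`, `b` meeting at angle `arccos κ` and third side `c`,
the left-hand side is the `cosh` of the distance between the points at distance `t` from the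
vertex on the sides `a` and `b`. -/
theorem cosh_mul_cosh_sub_sinh_mul_sinh_mul_le {a b c t κ : ℝ} (ht : 0 < t) (ha : t ≤ a)
    (hb : t ≤ b) (hc : 0 ≤ c) (habc : 2 * t ≤ a + b - c)
    (hκ : cosh c = cosh a * cosh b - sinh a * sinh b * κ) :
    cosh t * cosh t - sinh t * sinh t * κ ≤ 3 / 2 := by
  have hst : 0 < sinh t := sinh_pos_iff.mpr ht
  have hP : 0 < sinh a * sinh b :=
    mul_pos (sinh_pos_iff.mpr (ht.trans_le ha)) (sinh_pos_iff.mpr (ht.trans_le hb))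
  have h1 : sinh t * sinh t ≤ sinh a * sinh b * exp (-c) :=
    calc sinh t * sinh t ≤ (sinh a * exp (t - a)) * (sinh b * exp (t - b)) :=
          mul_le_mul (sinh_le_sinh_mul_exp_sub ha) (sinh_le_sinh_mul_exp_sub hb) hst.le
            (hst.le.trans (sinh_le_sinh_mul_exp_sub ha))
      _ = sinh a * sinh b * exp (2 * t - a - b) := by
            rw [mul_mul_mul_comm, ← exp_add, show t - a + (t - b) = 2 * t - a - b by ring]
      _ ≤ sinh a * sinh b * exp (-c) := by gcongr; linarith
  have h2 : sinh a * sinh b * (1 - κ) ≤ cosh c - 1 := by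
    have := one_le_cosh (a - b)
    rw [cosh_sub] at this
    linarith
  have h3 := exp_neg_mul_cosh_sub_one_le hc
  have h4 : sinh t * sinh t * (1 - κ) ≤ 1 / 2 := by
    rcases le_or_gt κ 1 with hκ1 | hκ1
    · calc sinh t * sinh t * (1 - κ) ≤ sinh a * sinh b * exp (-c) * (1 - κ) := by gcongr
        _ = exp (-c) * (sinh a * sinh b * (1 - κ)) := by ring
        _ ≤ exp (-c) * (cosh c - 1) := by gcongr
        _ ≤ 1 / 2 := h3
    · nlinarith
  nlinarith [cosh_sq t]

theorem one_sub_div_four_mul_exp_le {k : ℝ} (hk₁ : -1 ≤ k) (hk₂ : k ≤ 1) (s t : ℝ) :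
    (1 - k) / 4 * exp (s + t) ≤ cosh s * cosh t - k * (sinh s * sinh t) := by
  have h₁ : exp (s + t) / 2 ≤ cosh (s + t) := by
    rw [cosh_eq]
    linarith [exp_pos (-(s + t))]
  have h₂ := one_le_cosh (s - t)
  rw [cosh_add] at h₁
  rw [cosh_sub] at h₂
  nlinarith [mul_le_mul_of_nonneg_left h₁ (by linarith : 0 ≤ 1 - k),
    mul_le_mul_of_nonneg_left h₂ (by linarith : 0 ≤ 1 + k)]

/-- The unit-speed geodesic of `ℍ` through `I` at time `0` whose direction makes the angle
`2 * arctan m` with the upward vertical; `hypGeodesic 0 t = exp t • I`. -/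
noncomputable def hypGeodesic (m t : ℝ) : ℍ :=
  ⟨⟨m * (1 - exp t ^ 2) / (1 + m ^ 2 * exp t ^ 2), (1 + m ^ 2) * exp t / (1 + m ^ 2 * exp t ^ 2)⟩,
    by positivity⟩

theorem cosh_dist_hypGeodesic (m m' s t : ℝ) :
    cosh (dist (hypGeodesic m s) (hypGeodesic m' t)) = cosh s * cosh t -
      sinh s * sinh t * (((1 + m * m') ^ 2 - (m - m') ^ 2) / ((1 + m ^ 2) * (1 + m' ^ 2))) := by
  rw [UpperHalfPlane.cosh_dist, Complex.dist_eq, Complex.sq_norm, Complex.normSq_apply]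
  simp only [hypGeodesic, UpperHalfPlane.coe_mk, UpperHalfPlane.im, Complex.sub_re, Complex.sub_im,
    cosh_eq, sinh_eq, exp_neg]
  field_simp
  ring

theorem dist_hypGeodesic_hypGeodesic (m s t : ℝ) :
    dist (hypGeodesic m s) (hypGeodesic m t) = |s - t| := by
  refine cosh_injOn (Set.mem_Ici.mpr dist_nonneg) (Set.mem_Ici.mpr (abs_nonneg _)) ?_
  rw [cosh_dist_hypGeodesic, cosh_abs, cosh_sub]
  field_simp
  ring

theorem hypGeodesic_zero (m : ℝ) : hypGeodesic m 0 = hypGeodesic 0 0 := by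
  have : 1 + m ^ 2 ≠ 0 := by positivity
  ext
  simp [hypGeodesic, this]

theorem isGeodesicOn_hypGeodesic (m : ℝ) {a b : ℝ} (hab : a ≤ b) :
    IsGeodesicOn (hypGeodesic m) a b :=
  ⟨hab, fun s _ t _ => dist_hypGeodesic_hypGeodesic m s t⟩

theorem cosh_dist_hypGeodesic_zero (m s t : ℝ) :
    cosh (dist (hypGeodesic 0 s) (hypGeodesic m t)) =
      cosh s * cosh t - sinh s * sinh t * ((1 - m ^ 2) / (1 + m ^ 2)) := by
  rw [cosh_dist_hypGeodesic]
  ring_nf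

theorem dist_hypGeodesic_le_one {m a b t : ℝ} (ht : 0 < t) (ha : t ≤ a) (hb : t ≤ b)
    (habc : 2 * t ≤ a + b - dist (hypGeodesic 0 a) (hypGeodesic m b)) :
    dist (hypGeodesic 0 t) (hypGeodesic m t) ≤ 1 := by
  have h := cosh_mul_cosh_sub_sinh_mul_sinh_mul_le ht ha hb dist_nonneg habc
    (cosh_dist_hypGeodesic_zero m a b)
  rw [← cosh_dist_hypGeodesic_zero] at h
  have h' := cosh_le_cosh.mp (h.trans three_halves_le_cosh_one)
  rwa [abs_of_nonneg dist_nonneg, abs_one] at h'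

theorem exists_dist_hypGeodesic_eq {a b c : ℝ} (ha : 0 < a) (hb : 0 < b) (h₁ : |a - b| ≤ c)
    (h₂ : c < a + b) : ∃ m, dist (hypGeodesic 0 a) (hypGeodesic m b) = c := by
  have hc : 0 ≤ c := (abs_nonneg _).trans h₁
  have hP : 0 < sinh a * sinh b := mul_pos (sinh_pos_iff.mpr ha) (sinh_pos_iff.mpr hb)
  set κ := (cosh a * cosh b - cosh c) / (sinh a * sinh b) with hκ
  have hκ_le : κ ≤ 1 := by
    have := cosh_le_cosh.mpr (h₁.trans_eq (abs_of_nonneg hc).symm)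
    rw [cosh_sub] at this
    rw [div_le_one hP]
    linarith
  have hκ_gt : -1 < κ := by
    have := cosh_lt_cosh.mpr
      ((abs_of_nonneg hc).trans_lt (h₂.trans_eq (abs_of_pos (by linarith)).symm))
    rw [cosh_add] at this
    rw [lt_div_iff₀ hP]
    linarith
  refine ⟨√((1 - κ) / (1 + κ)), cosh_injOn (Set.mem_Ici.mpr dist_nonneg) (Set.mem_Ici.mpr hc) ?_⟩
  have hm : √((1 - κ) / (1 + κ)) ^ 2 = (1 - κ) / (1 + κ) :=
    sq_sqrt (div_nonneg (by linarith) (by linarith))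
  have hκ' : (1 - √((1 - κ) / (1 + κ)) ^ 2) / (1 + √((1 - κ) / (1 + κ)) ^ 2) = κ := by
    have : 1 + κ ≠ 0 := by linarith
    rw [hm]
    field_simp
    ring
  rw [cosh_dist_hypGeodesic_zero, hκ', hκ]
  field_simp
  ring

section Gromov

variable {X : Type*} [MetricSpace X]

noncomputable def gromovProduct (w x y : X) : ℝ := (dist w x + dist w y - dist x y) / 2

def GromovHyperbolic (δ : ℝ) (X : Type*) [MetricSpace X] : Prop :=
  ∀ w x y z : X, min (gromovProduct w x y) (gromovProduct w y z) - δ ≤ gromovProduct w x z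

theorem gromovProduct_nonneg (w x y : X) : 0 ≤ gromovProduct w x y := by
  have := dist_triangle_left x y w
  unfold gromovProduct
  linarith

theorem gromovProduct_le_dist_left (w x y : X) : gromovProduct w x y ≤ dist w x := by
  have := dist_triangle w x y
  unfold gromovProduct
  linarith

theorem gromovProduct_le_dist_right (w x y : X) : gromovProduct w x y ≤ dist w y := by
  have := dist_triangle_right w x y
  unfold gromovProduct
  linarith

theorem gromovProduct_add_gromovProduct (w x y : X) :
    gromovProduct w x y + gromovProduct x y w = dist x w := by
  unfold gromovProduct
  rw [dist_comm w y, dist_comm w x]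
  ring

end Gromov

namespace CATMinusOne

variable {X : Type*} [MetricSpace X]

theorem dist_le_one_of_le_gromovProduct (hX : CATMinusOne X) {w x y : X} {γ δ : ℝ → X}
    (hγ : IsGeodesicOn γ 0 (dist w x)) (hγ₀ : γ 0 = w) (hγ₁ : γ (dist w x) = x)
    (hδ : IsGeodesicOn δ 0 (dist w y)) (hδ₀ : δ 0 = w) (hδ₁ : δ (dist w y) = y)
    {t : ℝ} (ht : 0 < t) (htxy : t ≤ gromovProduct w x y) : dist (γ t) (δ t) ≤ 1 := by
  have hta : t ≤ dist w x := htxy.trans (gromovProduct_le_dist_left w x y)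
  have htb : t ≤ dist w y := htxy.trans (gromovProduct_le_dist_right w x y)
  have h₁ : |dist w x - dist w y| ≤ dist x y := by
    rw [dist_comm w x, dist_comm w y]
    exact abs_dist_sub_le x y w
  have h₂ : dist x y < dist w x + dist w y := by unfold gromovProduct at htxy; linarith
  obtain ⟨m, hm⟩ := exists_dist_hypGeodesic_eq (ht.trans_le hta) (ht.trans_le htb) h₁ h₂
  have hp'q' : dist (hypGeodesic 0 0) (hypGeodesic 0 (dist w x)) = dist w x := by
    rw [dist_hypGeodesic_hypGeodesic, zero_sub, abs_neg, abs_of_nonneg dist_nonneg]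
  have hp'r' : dist (hypGeodesic 0 0) (hypGeodesic m (dist w y)) = dist w y := by
    rw [← hypGeodesic_zero m, dist_hypGeodesic_hypGeodesic, zero_sub, abs_neg,
      abs_of_nonneg dist_nonneg]
  calc dist (γ t) (δ t) ≤ dist (hypGeodesic 0 t) (hypGeodesic m t) :=
        hX.2 w x y γ δ hγ hγ₀ hγ₁ hδ hδ₀ hδ₁ _ _ _ (hypGeodesic 0) (hypGeodesic m)
          hp'q' hp'r' hm (isGeodesicOn_hypGeodesic 0 dist_nonneg) rfl rfl
          (isGeodesicOn_hypGeodesic m dist_nonneg) (hypGeodesic_zero m) rfl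
          t ⟨ht.le, hta⟩ t ⟨ht.le, htb⟩
    _ ≤ 1 :=
        dist_hypGeodesic_le_one ht hta htb (by rw [hm]; unfold gromovProduct at htxy; linarith)

theorem gromovHyperbolic (hX : CATMinusOne X) : GromovHyperbolic 1 X := by
  intro w x y z
  set t := min (gromovProduct w x y) (gromovProduct w y z)
  rcases le_or_gt t 0 with ht | ht
  · linarith [gromovProduct_nonneg w x z]
  obtain ⟨γ, hγ, hγ₀, hγ₁⟩ := hX.1 w x
  obtain ⟨δ, hδ, hδ₀, hδ₁⟩ := hX.1 w y
  obtain ⟨η, hη, hη₀, hη₁⟩ := hX.1 w z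
  have hxy : t ≤ gromovProduct w x y := min_le_left _ _
  have hyz : t ≤ gromovProduct w y z := min_le_right _ _
  have hγδ := hX.dist_le_one_of_le_gromovProduct hγ hγ₀ hγ₁ hδ hδ₀ hδ₁ ht hxy
  have hδη := hX.dist_le_one_of_le_gromovProduct hδ hδ₀ hδ₁ hη hη₀ hη₁ ht hyz
  have hγx : dist (γ t) x = dist w x - t := by
    have := hγ.dist_eq_sub ht.le (hxy.trans (gromovProduct_le_dist_left w x y)) le_rfl
    rwa [hγ₁] at this
  have hηz : dist (η t) z = dist w z - t := by
    have := hη.dist_eq_sub ht.le (hyz.trans (gromovProduct_le_dist_right w y z)) le_rfl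
    rwa [hη₁] at this
  have h₁ := dist_triangle4 x (γ t) (δ t) (η t)
  have h₂ := dist_triangle x (η t) z
  rw [dist_comm x (γ t), hγx] at h₁
  rw [hηz] at h₂
  unfold gromovProduct
  linarith

end CATMinusOne

namespace GromovHyperbolic

open Finset

variable {X : Type*} [MetricSpace X] {δ K : ℝ} {x : ℕ → X} {N : ℕ}

theorem gromovProduct_chain_le (hX : GromovHyperbolic δ X) (hδ : 0 ≤ δ)
    (hvertex : ∀ i, i + 1 < N → gromovProduct (x (i + 1)) (x i) (x (i + 2)) ≤ K)
    (hedge : ∀ i, 0 < i → i + 1 < N → 2 * (K + δ) < dist (x i) (x (i + 1)))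
    {m : ℕ} (hm : 0 < m) (hmN : m < N) : gromovProduct (x m) (x 0) (x (m + 1)) ≤ K + δ := by
  induction m, hm using Nat.le_induction with
  | base => linarith [hvertex 0 hmN]
  | succ m hm ih =>
    have ih := ih (by omega)
    have hv : gromovProduct (x (m + 1)) (x m) (x (m + 1 + 1)) ≤ K := hvertex m hmN
    have he := hedge m hm hmN
    -- The long edge makes `(x m | x 0)` at `x (m + 1)` large, so the four-point condition bounds
    -- the other Gromov product.
    have hsplit := gromovProduct_add_gromovProduct (x (m + 1)) (x m) (x 0)
    rcases min_le_iff.mp (show _ ≤ K + δ by linarith [hX (x (m + 1)) (x m) (x 0) (x (m + 1 + 1))])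
      with h | h
    · linarith
    · exact h

theorem sum_dist_le (hX : GromovHyperbolic δ X) (hδ : 0 ≤ δ)
    (hvertex : ∀ i, i + 1 < N → gromovProduct (x (i + 1)) (x i) (x (i + 2)) ≤ K)
    (hedge : ∀ i, 0 < i → i + 1 < N → 2 * (K + δ) < dist (x i) (x (i + 1)))
    {m : ℕ} (hmN : m < N) :
    ∑ i ∈ range (m + 1), dist (x i) (x (i + 1)) ≤ dist (x 0) (x (m + 1)) + 2 * (K + δ) * m := by
  induction m with
  | zero => simp
  | succ m ih =>
    have hchain : gromovProduct (x (m + 1)) (x 0) (x (m + 1 + 1)) ≤ K + δ :=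
      hX.gromovProduct_chain_le hδ hvertex hedge m.succ_pos hmN
    unfold gromovProduct at hchain
    rw [dist_comm (x (m + 1)) (x 0)] at hchain
    rw [sum_range_succ]
    push_cast
    linarith [ih (by omega)]

theorem sum_dist_le_two_mul_dist_add (hX : GromovHyperbolic δ X) (hδ : 0 ≤ δ) (hKδ : 0 < K + δ)
    (hN : 0 < N)
    (hvertex : ∀ i, i + 1 < N → gromovProduct (x (i + 1)) (x i) (x (i + 2)) ≤ K)
    (hedge : ∀ i, 0 < i → i + 1 < N → 4 * (K + δ) ≤ dist (x i) (x (i + 1))) :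
    ∑ i ∈ range N, dist (x i) (x (i + 1)) ≤ 2 * dist (x 0) (x N) + 4 * (K + δ) := by
  obtain _ | _ | P := N
  · exact absurd hN (lt_irrefl 0)
  · rw [sum_range_one]
    linarith [dist_nonneg (x := x 0) (y := x 1)]
  have hsum := hX.sum_dist_le hδ hvertex (fun i hi hiN => by linarith [hedge i hi hiN])
    (m := P + 1) (by omega)
  have hint : ∀ i ∈ range P, 4 * (K + δ) ≤ dist (x (i + 1)) (x (i + 1 + 1)) :=
    fun i hi => hedge (i + 1) i.succ_pos (by have := mem_range.mp hi; omega)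
  have hcount := card_nsmul_le_sum _ _ _ hint
  rw [card_range, nsmul_eq_mul] at hcount
  rw [sum_range_succ, sum_range_succ'] at hsum ⊢
  push_cast at hsum
  linarith [dist_nonneg (x := x 0) (y := x 1), dist_nonneg (x := x (P + 1)) (y := x (P + 1 + 1))]

end GromovHyperbolic

/-- `min θ π` keeps `1 - cos` positive for every `θ > 0`; comparison angles never exceed `π`. -/
noncomputable def angleGromovBound (θ : ℝ) : ℝ := log (4 / (1 - cos (min θ π))) / 2

theorem cos_min_pi_lt_one {θ : ℝ} (hθ : 0 < θ) : cos (min θ π) < 1 := by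
  have h := strictAntiOn_cos (Set.left_mem_Icc.mpr pi_pos.le)
    ⟨(lt_min hθ pi_pos).le, min_le_right θ π⟩ (lt_min hθ pi_pos)
  rwa [cos_zero] at h

theorem angleGromovBound_pos {θ : ℝ} (hθ : 0 < θ) : 0 < angleGromovBound θ := by
  have h := cos_min_pi_lt_one hθ
  have : 1 < 4 / (1 - cos (min θ π)) := by
    rw [one_lt_div (by linarith)]
    linarith [neg_one_le_cos (min θ π)]
  exact div_pos (log_pos this) two_pos

theorem le_cos_of_le_arccos {θ x : ℝ} (hθ : 0 < θ) (h : θ ≤ arccos x) :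
    x ≤ cos θ := by
  rcases le_or_gt x (-1) with hx | hx
  · linarith [neg_one_le_cos θ]
  rcases le_or_gt x 1 with hx' | hx'
  · simpa [cos_arccos hx.le hx'] using
      cos_le_cos_of_nonneg_of_le_pi hθ.le (arccos_le_pi x) h
  · rw [arccos_eq_zero.mpr hx'.le] at h
    linarith

theorem add_sub_le_of_le_compAngle {θ s t d : ℝ} (hθ : 0 < θ) (hs : 0 < s) (ht : 0 < t)
    (hd : 0 ≤ d) (h : θ ≤ compAngle s t d) : s + t - d ≤ 2 * angleGromovBound θ := by
  set k := cos (min θ π)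
  have hk : (cosh s * cosh t - cosh d) / (sinh s * sinh t) ≤ k :=
    le_cos_of_le_arccos (lt_min hθ pi_pos) ((min_le_left θ π).trans h)
  rw [div_le_iff₀ (mul_pos (sinh_pos_iff.mpr hs) (sinh_pos_iff.mpr ht))] at hk
  have hk₁ : 0 < 1 - k := by linarith [cos_min_pi_lt_one hθ]
  have hexp : exp (s + t - 2 * angleGromovBound θ) = (1 - k) / 4 * exp (s + t) := by
    rw [exp_sub, angleGromovBound, mul_div_cancel₀ _ two_ne_zero, exp_log (by positivity)]
    field_simp
    rfl
  have hcosh : cosh d ≤ exp d := by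
    rw [cosh_eq]
    linarith [exp_le_exp.mpr (by linarith : -d ≤ d)]
  have : exp (s + t - 2 * angleGromovBound θ) ≤ exp d := by
    rw [hexp]
    linarith [one_sub_div_four_mul_exp_le (neg_one_le_cos (min θ π)) (cos_le_one _) s t]
  linarith [exp_le_exp.mp this]

namespace PiecewiseGeodesicWith

variable {X : Type*} [MetricSpace X] {c : ℝ → X} {T : ℕ → ℝ} {n : ℕ} {r θ : ℝ}

theorem strictMonoOn (hc : PiecewiseGeodesicWith c T n r θ) : StrictMonoOn T (Set.Iic n) :=
  strictMonoOn_Iic_of_lt_succ fun m hm => by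
    simpa only [Order.succ_eq_add_one] using (hc.2.1 m hm).1

theorem le_of_le (hc : PiecewiseGeodesicWith c T n r θ) {a b : ℕ} (hab : a ≤ b) (hb : b ≤ n) :
    T a ≤ T b :=
  hc.strictMonoOn.monotoneOn (Set.mem_Iic.mpr (hab.trans hb)) (Set.mem_Iic.mpr hb) hab

theorem sub_le_two_mul_dist_add {δ : ℝ} (hX : GromovHyperbolic δ X) (hδ : 0 ≤ δ) (hθ : 0 < θ)
    (hc : PiecewiseGeodesicWith c T n 0 θ)
    (hlong : ∀ i, 0 < i → i + 1 < n → 4 * (angleGromovBound θ + δ) ≤ T (i + 1) - T i) :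
    T n - T 0 ≤ 2 * dist (c (T 0)) (c (T n)) + 4 * (angleGromovBound θ + δ) := by
  obtain ⟨hn, hpiece, hangle⟩ := hc
  have hedge : ∀ i < n, dist (c (T i)) (c (T (i + 1))) = T (i + 1) - T i := fun i hi =>
    (hpiece i hi).2.2.dist_eq_sub le_rfl (hpiece i hi).1.le le_rfl
  have hvertex : ∀ i, i + 1 < n →
      gromovProduct (c (T (i + 1))) (c (T i)) (c (T (i + 2))) ≤ angleGromovBound θ := by
    intro i hi
    have h := hangle (i + 1) i.succ_pos hi (T (i + 1) - T i)
      (by linarith [(hpiece i (by omega)).1]) (by simp) (T (i + 2) - T (i + 1))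
      (by linarith [(hpiece (i + 1) hi).1]) le_rfl
    rw [sub_sub_cancel, add_sub_cancel] at h
    have := add_sub_le_of_le_compAngle hθ (by linarith [(hpiece i (by omega)).1])
      (by linarith [(hpiece (i + 1) hi).1]) dist_nonneg h
    unfold gromovProduct
    rw [dist_comm, hedge i (by omega), hedge (i + 1) hi]
    linarith
  have hsum := GromovHyperbolic.sum_dist_le_two_mul_dist_add (x := fun i => c (T i)) hX hδ
    (by linarith [angleGromovBound_pos hθ]) hn hvertex
    (fun i hi hin => by simpa only [hedge i (by omega)] using hlong i hi hin)
  rwa [Finset.sum_congr rfl fun i hi => hedge i (Finset.mem_range.mp hi),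
    Finset.sum_range_sub T] at hsum

theorem exists_piece_mem_and_piece_mem (hc : PiecewiseGeodesicWith c T n r θ) {s t : ℝ}
    (hs : T 0 ≤ s) (hst : s < t) (ht : t ≤ T n) :
    ∃ j k, j ≤ k ∧ k < n ∧ T j ≤ s ∧ s < T (j + 1) ∧ T k < t ∧ t ≤ T (k + 1) := by
  obtain ⟨j, hjn, hjs, hsj⟩ := Nat.exists_lt_not_and_succ (p := fun i => s < T i)
    (not_lt.mpr hs) (hst.trans_le ht)
  obtain ⟨k, hkn, hkt, htk⟩ := Nat.exists_lt_not_and_succ (p := fun i => t ≤ T i)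
    (not_le.mpr (hs.trans_lt hst)) ht
  simp only [not_lt, not_le] at hjs hkt
  refine ⟨j, k, ?_, hkn, hjs, hsj, hkt, htk⟩
  by_contra! h
  linarith [hc.le_of_le (show k + 1 ≤ j by omega) hjn.le]

theorem restrict (hc : PiecewiseGeodesicWith c T n r θ) {s t : ℝ} (hs : T 0 ≤ s) (hst : s < t)
    (ht : t ≤ T n) :
    ∃ (σ : ℕ → ℝ) (N : ℕ), σ 0 = s ∧ σ N = t ∧ PiecewiseGeodesicWith c σ N 0 θ ∧
      ∀ i, 0 < i → i + 1 < N → r ≤ σ (i + 1) - σ i := by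
  obtain ⟨j, k, hjk, hkn, hjs, hsj, hkt, htk⟩ := hc.exists_piece_mem_and_piece_mem hs hst ht
  have below : ∀ i, j + i ≤ k → T (j + i) < t := fun i hi =>
    (hc.le_of_le hi hkn.le).trans_lt hkt
  have above : ∀ i, 0 < i → j + i ≤ n → s < T (j + i) := fun i hi hin =>
    hsj.trans_le (hc.le_of_le (by omega) hin)
  -- `σ` runs through `s, T (j + 1), …, T k, t`.
  set σ : ℕ → ℝ := fun i => max s (min (T (j + i)) t) with hσ
  have mid : ∀ i, 0 < i → j + i ≤ k → σ i = T (j + i) := fun i hi hik => by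
    simp only [hσ, min_eq_left (below i hik).le, max_eq_right (above i hi (by omega)).le]
  have piece : ∀ i, j + i ≤ k →
      T (j + i) ≤ σ i ∧ σ i < σ (i + 1) ∧ σ (i + 1) ≤ T (j + i + 1) := fun i hik => by
    have h₁ := below i hik
    have h₂ := above (i + 1) i.succ_pos (by omega)
    have h₃ := (hc.2.1 (j + i) (by omega)).1
    simp only [hσ, ← add_assoc] at h₂ ⊢
    refine ⟨?_, ?_, max_le (by linarith) (min_le_left _ _)⟩
    · rw [min_eq_left h₁.le]; exact le_max_right _ _
    · rw [min_eq_left h₁.le, max_lt_iff, lt_max_iff, lt_max_iff, lt_min_iff, lt_min_iff]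
      exact ⟨Or.inr ⟨h₂, hst⟩, Or.inr ⟨h₃, h₁⟩⟩
  refine ⟨σ, k - j + 1, ?_, ?_,
    ⟨by omega, fun i hi => ?_, fun i hi hiN s' hs' hs'le t' ht' ht'le => ?_⟩, fun i hi hiN => ?_⟩
  · simp only [hσ, add_zero, max_eq_left ((min_le_left _ _).trans hjs)]
  · simp only [hσ, show j + (k - j + 1) = k + 1 by omega, min_eq_right htk, max_eq_right hst.le]
  · obtain ⟨h₁, h₂, h₃⟩ := piece i (by omega)
    exact ⟨h₂, by linarith, (hc.2.1 (j + i) (by omega)).2.2.mono h₁ h₂.le h₃⟩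
  · have hi' := mid i hi (by omega)
    have hprev := (piece (i - 1) (by omega)).1
    have hnext := (piece i (by omega)).2.2
    rw [show j + (i - 1) = j + i - 1 by omega] at hprev
    rw [hi'] at hs'le ht'le ⊢
    exact hc.2.2 (j + i) (by omega) (by omega) s' hs' (by linarith) t' ht' (by linarith)
  · rw [mid i hi (by omega), mid (i + 1) (by omega) (by omega), ← add_assoc]
    exact (hc.2.1 (j + i) (by omega)).2.1

end PiecewiseGeodesicWith

/-- For every θ₁ > 0 there are constants r₁, λ₁, ε₁ such that
in any CAT(-1) space every piecewise geodesic with pieces of length at least r₁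
meeting at angles at least θ₁ is a (λ₁, ε₁)-quasi-geodesic. -/
theorem statement2 (θ₁ : ℝ) (hθ : 0 < θ₁) :
    ∃ r₁ lam₁ ε₁ : ℝ, 0 < r₁ ∧ 1 ≤ lam₁ ∧ 0 ≤ ε₁ ∧
      ∀ (X : Type) [MetricSpace X], CATMinusOne X →
        ∀ (c : ℝ → X) (T : ℕ → ℝ) (n : ℕ), PiecewiseGeodesicWith c T n r₁ θ₁ →
          IsQuasiGeodesicOn lam₁ ε₁ c (T 0) (T n) := by
  have hL : 0 < 4 * (angleGromovBound θ₁ + 1) := by linarith [angleGromovBound_pos hθ]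
  refine ⟨_, 2, _, hL, one_le_two, hL.le, fun X _ hX c T n hc => ?_⟩
  refine isQuasiGeodesicOn_of_forall_lt hL.le fun s t hs hst ht => ?_
  obtain ⟨σ, N, rfl, rfl, hσ, hlong⟩ := hc.restrict hs hst ht
  exact hσ.sub_le_two_mul_dist_add hX.gromovHyperbolic zero_le_one hθ hlong
end

section
/- Let X be a CAT(-1) space with an ε-separated family {A_i} of closed convex subsets, and form the graph Γ_u with vertex set {A_i} and an edge between A_i and A_j whenever dist(A_i, A_j) ≤ u. If two vertices are joined by an edge of Γ_u, then they are joined by a path of length at most u/ε in the subgraph Γ'_u, where A_i and A_j are adjacent in Γ'_u if and only if the shortest segment between them meets no other member A_k of the family. -/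
/-- Adjacency in the `u`-nerve `Γ_u` of the family `A`. -/
def GammaAdj {X : Type*} [MetricSpace X] {ι : Type*} (A : ι → Set X) (u : ℝ)
    (i j : ι) : Prop :=
  i ≠ j ∧ setDist (A i) (A j) ≤ u

/-- Adjacency in the subgraph `Γ'_u`: additionally the shortest segment between
`A i` and `A j` meets no other member of the family. -/
def GammaPrimeAdj {X : Type*} [MetricSpace X] {ι : Type*} (A : ι → Set X) (u : ℝ)
    (i j : ι) : Prop :=
  GammaAdj A u i j ∧ ∃ (γ : ℝ → X) (L : ℝ), L = setDist (A i) (A j) ∧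
    IsGeodesicOn γ 0 L ∧ γ 0 ∈ A i ∧ γ L ∈ A j ∧
    ∀ k, k ≠ i → k ≠ j → ∀ t ∈ Set.Icc (0:ℝ) L, γ t ∉ A k

def ChainOfLength {α : Type*} (R : α → α → Prop) (n : ℕ) (a b : α) : Prop :=
  ∃ f : ℕ → α, f 0 = a ∧ f n = b ∧ ∀ m < n, R (f m) (f (m + 1))

namespace ChainOfLength

variable {α : Type*} {R : α → α → Prop}

theorem single {a b : α} (h : R a b) : ChainOfLength R 1 a b :=
  ⟨fun m => if m = 0 then a else b, rfl, rfl, fun m hm => by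
    obtain rfl : m = 0 := Nat.lt_one_iff.mp hm
    simpa using h⟩

theorem append {a b c : α} {n₁ n₂ : ℕ} (h₁ : ChainOfLength R n₁ a b)
    (h₂ : ChainOfLength R n₂ b c) : ChainOfLength R (n₁ + n₂) a c := by
  obtain ⟨f₁, hf₁0, hf₁n, hf₁⟩ := h₁
  obtain ⟨f₂, hf₂0, hf₂n, hf₂⟩ := h₂
  refine ⟨fun m => if m ≤ n₁ then f₁ m else f₂ (m - n₁), by simp [hf₁0], ?_, fun m hm => ?_⟩
  · dsimp only
    split_ifs with h
    · obtain rfl : n₂ = 0 := by omega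
      rw [Nat.add_zero, hf₁n, ← hf₂0, hf₂n]
    · rwa [Nat.add_sub_cancel_left]
  rcases lt_or_ge m n₁ with hm₁ | hm₁
  · simpa [hm₁.le, Nat.succ_le_of_lt hm₁] using hf₁ m hm₁
  · have hstep : m + 1 - n₁ = m - n₁ + 1 := by omega
    have hfm : (if m ≤ n₁ then f₁ m else f₂ (m - n₁)) = f₂ (m - n₁) := by
      split_ifs with h
      · obtain rfl : m = n₁ := le_antisymm h hm₁
        simp [hf₁n, hf₂0]
      · rfl
    simpa [hfm, show ¬ m + 1 ≤ n₁ by omega, hstep] using hf₂ (m - n₁) (by omega)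

theorem ne_zero_of_ne {a b : α} {n : ℕ} (h : ChainOfLength R n a b) (hab : a ≠ b) :
    n ≠ 0 := by
  rintro rfl
  obtain ⟨f, hf0, hfn, -⟩ := h
  exact hab (hf0.symm.trans hfn)

end ChainOfLength

section Geodesic

variable {X : Type*} [MetricSpace X]

theorem setDist_le_dist_s6 {A B : Set X} {x y : X} (hx : x ∈ A) (hy : y ∈ B) :
    setDist A B ≤ dist x y :=
  csInf_le ⟨0, by rintro r ⟨⟨a, b⟩, -, rfl⟩; exact dist_nonneg⟩ ⟨(x, y), ⟨hx, hy⟩, rfl⟩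

theorem setDist_le_of_geodesic_mem {γ : ℝ → X} {L t : ℝ} (hγ : IsGeodesicOn γ 0 L)
    (ht : t ∈ Set.Icc 0 L) {A B C : Set X} (h0 : γ 0 ∈ A) (hL : γ L ∈ B) (htC : γ t ∈ C) :
    setDist A C ≤ t ∧ setDist C B ≤ L - t := by
  have h0L : (0 : ℝ) ∈ Set.Icc 0 L := ⟨le_rfl, hγ.1⟩
  have hLL : L ∈ Set.Icc 0 L := ⟨hγ.1, le_rfl⟩
  constructor
  · calc setDist A C ≤ dist (γ 0) (γ t) := setDist_le_dist_s6 h0 htC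
      _ = t := by rw [hγ.2 0 h0L t ht, zero_sub, abs_neg, abs_of_nonneg ht.1]
  · calc setDist C B ≤ dist (γ t) (γ L) := setDist_le_dist_s6 htC hL
      _ = L - t := by rw [hγ.2 t ht L hLL, abs_sub_comm, abs_of_nonneg (sub_nonneg.2 ht.2)]

end Geodesic

section Nerve

variable {X : Type*} [MetricSpace X] {ι : Type*} {A : ι → Set X} {ε u : ℝ}

theorem exists_chain_gammaPrimeAdj (hε : 0 < ε)
    (hsep : ∀ i j, i ≠ j → ε ≤ setDist (A i) (A j))
    (hexists : ∀ i j, i ≠ j → ∃ (γ : ℝ → X) (L : ℝ), L = setDist (A i) (A j) ∧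
      IsGeodesicOn γ 0 L ∧ γ 0 ∈ A i ∧ γ L ∈ A j) :
    ∀ (N : ℕ) (i j : ι), GammaAdj A u i j → setDist (A i) (A j) ≤ N * ε →
      ∃ n : ℕ, (n : ℝ) ≤ setDist (A i) (A j) / ε ∧ ChainOfLength (GammaPrimeAdj A u) n i j := by
  intro N
  induction N with
  | zero =>
    intro i j hij hN
    rw [Nat.cast_zero, zero_mul] at hN
    linarith [hsep i j hij.1]
  | succ N ih =>
    intro i j hij hN
    obtain ⟨γ, L, rfl, hγ, h0, hL⟩ := hexists i j hij.1
    by_cases hmeet : ∃ k, k ≠ i ∧ k ≠ j ∧ ∃ t ∈ Set.Icc 0 (setDist (A i) (A j)), γ t ∈ A k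
    · obtain ⟨k, hki, hkj, t, ht, htk⟩ := hmeet
      obtain ⟨hik, hkj'⟩ := setDist_le_of_geodesic_mem hγ ht h0 hL htk
      have hεik := hsep i k hki.symm
      have hεkj := hsep k j hkj
      push_cast at hN
      obtain ⟨n₁, hn₁, hc₁⟩ := ih i k ⟨hki.symm, by linarith [hij.2]⟩ (by linarith)
      obtain ⟨n₂, hn₂, hc₂⟩ := ih k j ⟨hkj, by linarith [hij.2]⟩ (by linarith)
      refine ⟨n₁ + n₂, ?_, hc₁.append hc₂⟩
      calc ((n₁ + n₂ : ℕ) : ℝ) ≤ t / ε + (setDist (A i) (A j) - t) / ε := by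
            push_cast
            gcongr
            · exact hn₁.trans (div_le_div_of_nonneg_right hik hε.le)
            · exact hn₂.trans (div_le_div_of_nonneg_right hkj' hε.le)
        _ = setDist (A i) (A j) / ε := by rw [← add_div, add_sub_cancel]
    · push Not at hmeet
      refine ⟨1, ?_, .single ⟨hij, γ, _, rfl, hγ, h0, hL, hmeet⟩⟩
      rw [Nat.cast_one, le_div_iff₀ hε, one_mul]
      exact hsep i j hij.1

end Nerve

theorem statement6_general {X : Type*} [MetricSpace X]
    {ι : Type*} (A : ι → Set X) (ε : ℝ) (hε : 0 < ε)
    (hsep : ∀ i j, i ≠ j → ε ≤ setDist (A i) (A j))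
    (hexists : ∀ i j, i ≠ j → ∃ (γ : ℝ → X) (L : ℝ), L = setDist (A i) (A j) ∧
      IsGeodesicOn γ 0 L ∧ γ 0 ∈ A i ∧ γ L ∈ A j)
    (u : ℝ) (i j : ι) (hadj : GammaAdj A u i j) :
    ∃ (n : ℕ) (f : ℕ → ι), 0 < n ∧ (n : ℝ) ≤ u / ε ∧ f 0 = i ∧ f n = j ∧
      ∀ m < n, GammaPrimeAdj A u (f m) (f (m + 1)) := by
  obtain ⟨N, hN⟩ := exists_nat_ge (setDist (A i) (A j) / ε)
  obtain ⟨n, hn, hchain⟩ := exists_chain_gammaPrimeAdj hε hsep hexists N i j hadj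
    ((div_le_iff₀ hε).mp hN)
  have hn₀ : n ≠ 0 := hchain.ne_zero_of_ne hadj.1
  obtain ⟨f, hf0, hfn, hf⟩ := hchain
  exact ⟨n, f, Nat.pos_of_ne_zero hn₀, hn.trans (div_le_div_of_nonneg_right hadj.2 hε.le),
    hf0, hfn, hf⟩

/-- If two vertices of the nerve `Γ_u` of an `ε`-separated
family of closed convex subsets of a complete CAT(-1) space are joined by an
edge, then they are joined in the subgraph `Γ'_u` by a path of length at most
`u / ε`. -/
theorem statement6 {X : Type*} [MetricSpace X] [CompleteSpace X] (hX : CATMinusOne X)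
    {ι : Type*} (A : ι → Set X) (ε : ℝ) (hε : 0 < ε)
    (hcl : ∀ i, IsClosed (A i)) (hconv : ∀ i, GConvex (A i))
    (hsep : ∀ i j, i ≠ j → ε ≤ setDist (A i) (A j))
    (hexists : ∀ i j, i ≠ j → ∃ (γ : ℝ → X) (L : ℝ), L = setDist (A i) (A j) ∧
      IsGeodesicOn γ 0 L ∧ γ 0 ∈ A i ∧ γ L ∈ A j)
    (u : ℝ) (i j : ι) (hadj : GammaAdj A u i j) :
    ∃ (n : ℕ) (f : ℕ → ι), 0 < n ∧ (n : ℝ) ≤ u / ε ∧ f 0 = i ∧ f n = j ∧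
      ∀ m < n, GammaPrimeAdj A u (f m) (f (m + 1)) :=
  statement6_general A ε hε hsep hexists u i j hadj
end
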